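/- Let ℓ ≥ 2, let j be even with 1 ≤ j ≤ ℓ, and let w = (w₁, w₂, …, w_{2ℓ}) ∈ 𝔽₄^{2ℓ} with w₂ ≠ 0. If χ_w(O₀) = −1 + 4^{ℓ−1}, then χ_w(Z_{ℓ,j} \ O₀) = 2·4^{ℓ−1} or χ_w(Z_{ℓ,j} \ O₀) = −2·4^{ℓ−1}. -/

import Mathlib

/-- The quadratic form `Q_{ℓ,j}(x₁,…,x_{2ℓ}) = Σ_{i=1}^{j} (α x_{2i-1}² + x_{2i-1}x_{2i} + x_{2i}²)
+ Σ_{i=j+1}^{ℓ} x_{2i-1}x_{2i}`  (coordinates are 0-indexed in Lean). -/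
def Qform {F4 : Type*} [Field F4] (α : F4) (ℓ j : ℕ) (x : Fin (2 * ℓ) → F4) : F4 :=
  ∑ i : Fin ℓ,
    (let a := x ⟨2 * i.val, by have := i.isLt; omega⟩
     let b := x ⟨2 * i.val + 1, by have := i.isLt; omega⟩
     if i.val < j then α * a ^ 2 + a * b + b ^ 2 else a * b)

open scoped Classical in
/-- The value `(-1)^{tr(t)} ∈ ℂ`, where `tr : 𝔽₄ → 𝔽₂`, `tr(t) = t + t²`, is the trace map. -/
noncomputable def chi4 {F4 : Type*} [Field F4] (t : F4) : ℂ :=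
  if t + t ^ 2 = 0 then 1 else -1

/-- The character sum `χ_w(S) = Σ_{v ∈ S} (-1)^{tr(Σ_i w_i v_i)}`. -/
noncomputable def chiSum {F4 : Type*} [Field F4] {m : ℕ} (w : Fin m → F4)
    (S : Set (Fin m → F4)) : ℂ :=
  ∑ᶠ v ∈ S, chi4 (∑ i, w i * v i)

/-!
Let `ψ = (-1)^{tr(·)}` and `G = Σ_{Q(x)=0} ψ(w·x) = 1 + χ_w(Z)`. Orthogonality of `ψ` gives
`4G = Σ_c Σ_x ψ(c Q(x) + w·x)`. The term `c = 0` vanishes because `w ≠ 0`. For `c ≠ 0` the sum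
factors over the `ℓ` planes of `Q`; summing out one coordinate, each plane contributes
`±4 ψ(q_i(w_{2i}, w_{2i-1}) / c)`, with the sign `-` exactly on the `j` anisotropic planes, so the
total is `4^ℓ ψ(Q*(w) / c)` for the dual form `Q*`, as `j` is even. Summing over `c ≠ 0` gives
`G = 3·4^{ℓ-1}` if `Q*(w) = 0` and `G = -4^{ℓ-1}` otherwise, and subtracting `χ_w(O₀)` leaves
`±2·4^{ℓ-1}`.
-/

open Finset

namespace AddChar

theorem map_sum_eq_prod {ι A M : Type*} [AddCommMonoid A] [CommMonoid M]
    (ψ : AddChar A M) (s : Finset ι) (f : ι → A) : ψ (∑ i ∈ s, f i) = ∏ i ∈ s, ψ (f i) := by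
  classical
  induction s using Finset.induction_on with
  | empty => simp
  | insert a s ha ih => rw [sum_insert ha, prod_insert ha, map_add_eq_mul, ih]

variable {F R : Type*} [Field F] [Fintype F] [CommRing R] [IsDomain R] {ψ : AddChar F R}

theorem sum_sum_mul_eq_card_mul_sum_filter [DecidableEq F] (hψ : ψ ≠ 1) {X : Type*} [Fintype X]
    (f : X → F) (g : X → R) :
    ∑ c, ∑ x, ψ (c * f x) * g x = Fintype.card F * ∑ x with f x = 0, g x := by
  rw [sum_comm, sum_filter, mul_sum]
  refine sum_congr rfl fun x _ => ?_
  rw [← sum_mul, sum_mulShift _ (IsPrimitive.of_ne_one hψ)]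
  split_ifs <;> simp

theorem sum_dotProduct_eq_zero {ι : Type*} [Fintype ι] [DecidableEq ι] (hψ : ψ ≠ 1)
    {w : ι → F} (hw : w ≠ 0) : ∑ x : ι → F, ψ (w ⬝ᵥ x) = 0 := by
  obtain ⟨k, hk⟩ := Function.ne_iff.mp hw
  obtain ⟨a, ha⟩ := ne_one_iff.mp hψ
  refine sum_eq_zero_of_ne_one (ψ := ψ.compAddMonoidHom (.mk' (w ⬝ᵥ ·) (dotProduct_add w))) ?_
  refine ne_one_iff.mpr ⟨Pi.single k (a / w k), ?_⟩
  rwa [compAddMonoidHom_apply, AddMonoidHom.mk'_apply, dotProduct_single, mul_div_cancel₀ _ hk]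

theorem sum_hyperbolicPlane (hψ : ψ ≠ 1) {c : F} (hc0 : c ≠ 0) (u v : F) :
    ∑ a, ∑ b, ψ (c * (a * b) + (u * a + v * b)) = Fintype.card F * ψ (-(u * v) * c⁻¹) := by
  classical
  have inner (a : F) : ∑ b, ψ (c * (a * b) + (u * a + v * b))
      = ψ (u * a) * if c * a + v = 0 then (Fintype.card F : R) else 0 := by
    have := sum_mulShift (c * a + v) (IsPrimitive.of_ne_one hψ)
    push_cast at this
    rw [← this, mul_sum]
    refine sum_congr rfl fun b _ => ?_
    rw [← map_add_eq_mul]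
    ring_nf
  simp_rw [inner]
  rw [sum_eq_single (-v * c⁻¹)]
  · rw [if_pos (by field_simp; ring)]
    ring_nf
  · intro a _ hne
    rw [if_neg, mul_zero]
    intro h
    exact hne (by field_simp; linear_combination h)
  · simp

end AddChar

section FourElements

variable {F : Type*} [Field F] [Fintype F] (hc : Fintype.card F = 4)
include hc

theorem two_eq_zero_of_card_eq_four : (2 : F) = 0 := by
  refine (pow_eq_zero_iff two_ne_zero).mp ?_
  have h := FiniteField.cast_card_eq_zero F
  rw [hc] at h
  linear_combination h

theorem pow_four_eq_self_of_card_eq_four (x : F) : x ^ 4 = x := by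
  simpa [hc] using FiniteField.pow_card x

theorem pow_three_eq_one_of_card_eq_four {c : F} (hc0 : c ≠ 0) : c ^ 3 = 1 := by
  simpa [hc] using FiniteField.pow_card_sub_one_eq_one c hc0

theorem chi4_add (s t : F) : chi4 (s + t) = chi4 s * chi4 t := by
  have h2 := two_eq_zero_of_card_eq_four hc
  have tr_eq_zero_or_one (x : F) : x + x ^ 2 = 0 ∨ x + x ^ 2 = 1 :=
    IsIdempotentElem.iff_eq_zero_or_one.mp <| by
      rw [IsIdempotentElem, ← sq]
      linear_combination pow_four_eq_self_of_card_eq_four hc x + x ^ 3 * h2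
  have tr_add : (s + t) + (s + t) ^ 2 = (s + s ^ 2) + (t + t ^ 2) := by
    linear_combination (s * t) * h2
  have h11 : (1 : F) + 1 = 0 := by linear_combination h2
  unfold chi4
  rcases tr_eq_zero_or_one s with hs | hs <;> rcases tr_eq_zero_or_one t with ht | ht <;>
    simp [tr_add, hs, ht, h11]

noncomputable def trChar : AddChar F ℂ where
  toFun := chi4
  map_zero_eq_one' := by simp [chi4]
  map_add_eq_mul' := chi4_add hc

theorem trChar_apply (t : F) : trChar hc t = chi4 t := rfl

theorem trChar_sq (t : F) : trChar hc (t ^ 2) = trChar hc t := by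
  simp only [trChar_apply, chi4]
  rw [show t ^ 2 + (t ^ 2) ^ 2 = t + t ^ 2 by
    linear_combination pow_four_eq_self_of_card_eq_four hc t]

variable {α : F} (hα : α ^ 2 = α + 1)
include hα

theorem trChar_eq_neg_one : trChar hc α = -1 := by
  have h : α + α ^ 2 = 1 := by linear_combination hα + α * two_eq_zero_of_card_eq_four hc
  simp [trChar_apply, chi4, h]

theorem trChar_ne_one : trChar hc ≠ 1 :=
  AddChar.ne_one_iff.mpr ⟨α, by rw [trChar_eq_neg_one hc hα]; norm_num⟩

theorem sum_anisotropicPlane {c : F} (hc0 : c ≠ 0) (u v : F) :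
    ∑ a, ∑ b, trChar hc (c * (α * a ^ 2 + a * b + b ^ 2) + (u * a + v * b))
      = -4 * trChar hc ((α * v ^ 2 + v * u + u ^ 2) * c⁻¹) := by
  classical
  have h2 := two_eq_zero_of_card_eq_four hc
  have hc3 := pow_three_eq_one_of_card_eq_four hc hc0
  have hinv : c * c⁻¹ = 1 := mul_inv_cancel₀ hc0
  have hsq : c ^ 2 = c⁻¹ := eq_inv_of_mul_eq_one_left (by linear_combination hc3)
  -- `c b² = (c² b)²` as `c⁴ = c`, so the square term is linear in `b` under the trace
  have square_term (b : F) : trChar hc (c * b ^ 2) = trChar hc (b * c ^ 2) := by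
    rw [← trChar_sq hc (b * c ^ 2)]
    congr 1
    linear_combination -b ^ 2 * pow_four_eq_self_of_card_eq_four hc c
  have inner (a : F) : ∑ b, trChar hc (c * (α * a ^ 2 + a * b + b ^ 2) + (u * a + v * b))
      = trChar hc (c * α * a ^ 2 + u * a) * if c * a + c ^ 2 + v = 0 then 4 else 0 := by
    have := AddChar.sum_mulShift (c * a + c ^ 2 + v)
      (AddChar.IsPrimitive.of_ne_one (trChar_ne_one hc hα))
    rw [hc] at this
    push_cast at this
    rw [← this, mul_sum]
    refine sum_congr rfl fun b _ => ?_
    calc trChar hc (c * (α * a ^ 2 + a * b + b ^ 2) + (u * a + v * b))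
        = trChar hc (c * α * a ^ 2 + u * a + b * (c * a + v)) * trChar hc (c * b ^ 2) := by
          rw [← AddChar.map_add_eq_mul]
          ring_nf
      _ = trChar hc (c * α * a ^ 2 + u * a) * trChar hc (b * (c * a + c ^ 2 + v)) := by
          rw [square_term, ← AddChar.map_add_eq_mul, ← AddChar.map_add_eq_mul]
          ring_nf
  simp_rw [inner]
  rw [sum_eq_single (c + v * c⁻¹)]
  · rw [if_pos (by linear_combination (c ^ 2 + v) * h2 + v * hinv)]
    have hu : trChar hc (u * c) = trChar hc (u ^ 2 * c⁻¹) := by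
      rw [← trChar_sq hc (u * c), ← hsq]
      ring_nf
    have harg : c * α * (c + v * c⁻¹) ^ 2 + u * (c + v * c⁻¹)
        = α + u * c + (α * v ^ 2 + v * u) * c⁻¹ := by
      linear_combination α * hc3 + α * v * c ^ 2 * c⁻¹ * h2 + α * v ^ 2 * c⁻¹ * hinv
    rw [harg, add_mul _ (u ^ 2), AddChar.map_add_eq_mul, AddChar.map_add_eq_mul,
      AddChar.map_add_eq_mul, trChar_eq_neg_one hc hα, hu]
    ring
  · intro a _ hne
    rw [if_neg, mul_zero]
    intro h
    exact hne (by linear_combination c⁻¹ * h - (c + v * c⁻¹) * h2 - (a + c) * hinv)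
  · simp

end FourElements

def pairIndex (ℓ : ℕ) : Fin ℓ × Fin 2 ≃ Fin (2 * ℓ) :=
  finProdFinEquiv.trans (finCongr (mul_comm ℓ 2))

theorem pairIndex_zero (ℓ : ℕ) (i : Fin ℓ) : pairIndex ℓ (i, 0) = ⟨2 * i, by omega⟩ := by
  ext
  simp [pairIndex]

theorem pairIndex_one (ℓ : ℕ) (i : Fin ℓ) : pairIndex ℓ (i, 1) = ⟨2 * i + 1, by omega⟩ := by
  ext
  simp [pairIndex]
  ring

def pairs (F : Type*) (ℓ : ℕ) : (Fin (2 * ℓ) → F) ≃ (Fin ℓ → F × F) :=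
  ((pairIndex ℓ).arrowCongr (Equiv.refl F)).symm.trans <|
    (Equiv.curry _ _ _).trans <| Equiv.piCongrRight fun _ => piFinTwoEquiv fun _ => F

theorem pairs_apply {F : Type*} {ℓ : ℕ} (x : Fin (2 * ℓ) → F) (i : Fin ℓ) :
    pairs F ℓ x i = (x ⟨2 * i, by omega⟩, x ⟨2 * i + 1, by omega⟩) := by
  simp [pairs, ← pairIndex_zero, ← pairIndex_one]

theorem dotProduct_eq_sum_pairs {R : Type*} [Mul R] [AddCommMonoid R] {ℓ : ℕ}
    (w x : Fin (2 * ℓ) → R) :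
    w ⬝ᵥ x = ∑ i, ((pairs R ℓ w i).1 * (pairs R ℓ x i).1
      + (pairs R ℓ w i).2 * (pairs R ℓ x i).2) := by
  rw [dotProduct, ← (pairIndex ℓ).sum_comp, Fintype.sum_prod_type]
  simp [pairs_apply, Fin.sum_univ_two, pairIndex_zero, pairIndex_one]

def planeForm {F : Type*} [Field F] (α : F) (aniso : Prop) [Decidable aniso] (p : F × F) : F :=
  if aniso then α * p.1 ^ 2 + p.1 * p.2 + p.2 ^ 2 else p.1 * p.2

theorem Qform_eq_sum_planeForm {F : Type*} [Field F] (α : F) (ℓ j : ℕ) (x : Fin (2 * ℓ) → F) :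
    Qform α ℓ j x = ∑ i, planeForm α (i.val < j) (pairs F ℓ x i) := by
  simp only [Qform, planeForm, pairs_apply]

def dualQform {F : Type*} [Field F] (α : F) (ℓ j : ℕ) (w : Fin (2 * ℓ) → F) : F :=
  ∑ i, planeForm α (i.val < j) (pairs F ℓ w i).swap

section GaussSums

variable {F : Type*} [Field F] [Fintype F] (hc : Fintype.card F = 4) {α : F}
  (hα : α ^ 2 = α + 1)
include hc hα

theorem sum_planeForm (P : Prop) [Decidable P] {c : F} (hc0 : c ≠ 0) (u v : F) :
    ∑ p : F × F, trChar hc (c * planeForm α P p + (u * p.1 + v * p.2))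
      = (if P then -4 else 4) * trChar hc (planeForm α P (v, u) * c⁻¹) := by
  rw [Fintype.sum_prod_type]
  by_cases hP : P
  · simpa only [planeForm, if_pos hP] using sum_anisotropicPlane hc hα hc0 u v
  · simp only [planeForm, if_neg hP]
    rw [AddChar.sum_hyperbolicPlane (trChar_ne_one hc hα) hc0, hc]
    congr 2
    linear_combination -(u * v * c⁻¹) * two_eq_zero_of_card_eq_four hc

theorem sum_trChar_Qform_add_dotProduct {ℓ j : ℕ} (hj : Even j) (hjl : j ≤ ℓ)
    (w : Fin (2 * ℓ) → F) {c : F} (hc0 : c ≠ 0) :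
    ∑ x, trChar hc (c * Qform α ℓ j x + w ⬝ᵥ x)
      = 4 ^ ℓ * trChar hc (dualQform α ℓ j w * c⁻¹) := by
  classical
  calc ∑ x, trChar hc (c * Qform α ℓ j x + w ⬝ᵥ x)
      = ∑ y : Fin ℓ → F × F, ∏ i, trChar hc (c * planeForm α (i.val < j) (y i)
          + ((pairs F ℓ w i).1 * (y i).1 + (pairs F ℓ w i).2 * (y i).2)) :=
        Fintype.sum_equiv (pairs F ℓ) _ _ fun x => by
          rw [Qform_eq_sum_planeForm, dotProduct_eq_sum_pairs, mul_sum, ← sum_add_distrib,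
            AddChar.map_sum_eq_prod]
    _ = ∏ i : Fin ℓ, ∑ p : F × F, trChar hc (c * planeForm α (i.val < j) p
          + ((pairs F ℓ w i).1 * p.1 + (pairs F ℓ w i).2 * p.2)) := by
        rw [Fintype.prod_sum]
    _ = ∏ i : Fin ℓ, ((if i.val < j then -4 else 4)
          * trChar hc (planeForm α (i.val < j) (pairs F ℓ w i).swap * c⁻¹)) :=
        prod_congr rfl fun i _ => sum_planeForm hc hα _ hc0 _ _
    _ = 4 ^ ℓ * trChar hc (dualQform α ℓ j w * c⁻¹) := by
        rw [prod_mul_distrib, dualQform, sum_mul, AddChar.map_sum_eq_prod]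
        congr 1
        rw [prod_ite, prod_const, prod_const, filter_not, card_sdiff_of_subset (filter_subset _ _),
          card_univ, Fintype.card_fin, Fin.card_filter_val_lt, min_eq_right hjl, hj.neg_pow,
          ← pow_add, Nat.add_sub_cancel' hjl]

theorem four_mul_sum_filter_Qform_eq_zero [DecidableEq F] {ℓ j : ℕ} (hj : Even j) (hjl : j ≤ ℓ)
    {w : Fin (2 * ℓ) → F} (hw : w ≠ 0) :
    4 * ∑ x with Qform α ℓ j x = 0, trChar hc (w ⬝ᵥ x)
      = 4 ^ ℓ * ((if dualQform α ℓ j w = 0 then 4 else 0) - 1) := by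
  have hψ := trChar_ne_one hc hα
  have orthogonality := AddChar.sum_sum_mul_eq_card_mul_sum_filter hψ (Qform α ℓ j)
    fun x => trChar hc (w ⬝ᵥ x)
  rw [hc, Nat.cast_ofNat] at orthogonality
  have sum_dual : ∑ c : F, trChar hc (dualQform α ℓ j w * c⁻¹)
      = if dualQform α ℓ j w = 0 then 4 else 0 := by
    have := AddChar.sum_mulShift (dualQform α ℓ j w) (AddChar.IsPrimitive.of_ne_one hψ)
    rw [hc] at this
    push_cast at this
    rw [← this]
    exact Fintype.sum_equiv (Equiv.inv F) _ _ fun c => by simp [mul_comm]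
  rw [← orthogonality, ← sum_dual]
  simp_rw [← AddChar.map_add_eq_mul]
  rw [Fintype.sum_eq_add_sum_compl (0 : F)
      (fun c => ∑ x, trChar hc (c * Qform α ℓ j x + w ⬝ᵥ x)),
    Fintype.sum_eq_add_sum_compl (0 : F) (fun c => trChar hc (dualQform α ℓ j w * c⁻¹))]
  simp only [zero_mul, zero_add, inv_zero, mul_zero, AddChar.map_zero_eq_one,
    AddChar.sum_dotProduct_eq_zero hψ hw, add_sub_cancel_left, mul_sum]
  exact sum_congr rfl fun c hc0 =>
    sum_trChar_Qform_add_dotProduct hc hα hj hjl w (by simpa using hc0)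

end GaussSums

theorem stmt13 (F4 : Type*) [Field F4] [Fintype F4] (hc : Fintype.card F4 = 4)
    (α : F4) (hα : α ^ 2 = α + 1)
    (ℓ j : ℕ) (hℓ : 2 ≤ ℓ) (hjeven : Even j) (hjl : j ≤ ℓ)
    (Z : Set (Fin (2 * ℓ) → F4)) (hZ : Z = {x | x ≠ 0 ∧ Qform α ℓ j x = 0})
    (O₀ : Set (Fin (2 * ℓ) → F4)) (hO₀ : O₀ = {x ∈ Z | x ⟨0, by omega⟩ = 0})
    (w : Fin (2 * ℓ) → F4) (hw : w ⟨1, by omega⟩ ≠ 0)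
    (hval : chiSum w O₀ = -1 + 4 ^ (ℓ - 1)) :
    chiSum w (Z \ O₀) = 2 * 4 ^ (ℓ - 1) ∨ chiSum w (Z \ O₀) = -(2 * 4 ^ (ℓ - 1)) := by
  classical
  have hcone := four_mul_sum_filter_Qform_eq_zero hc hα hjeven hjl (w := w)
    (by rintro rfl; exact hw rfl)
  have cone_eq_sum : chiSum w {x | Qform α ℓ j x = 0}
      = ∑ x with Qform α ℓ j x = 0, trChar hc (w ⬝ᵥ x) := by
    rw [chiSum, finsum_mem_eq_toFinset_sum, Set.toFinset_ofPred]
    rfl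
  have cone_eq_insert : chiSum w {x | Qform α ℓ j x = 0} = 1 + chiSum w Z := by
    have : {x | Qform α ℓ j x = 0} = insert 0 Z := by
      ext x
      by_cases hx : x = 0 <;> simp [hZ, hx, Qform]
    rw [this, chiSum, finsum_mem_insert _ (by simp [hZ]) Z.toFinite]
    simp [chi4, chiSum]
  have hdiff : chiSum w (Z \ O₀) = chiSum w Z - chiSum w O₀ := by
    rw [chiSum, chiSum, chiSum, ← finsum_mem_add_sdiff (hO₀ ▸ Set.sep_subset _ _) Z.toFinite]
    ring
  have hpow : (4 : ℂ) ^ ℓ = 4 * 4 ^ (ℓ - 1) := by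
    rw [← pow_succ']
    congr
    omega
  rw [hdiff, hval]
  split_ifs at hcone
  · left
    linear_combination -cone_eq_insert + cone_eq_sum + hcone / 4 + 3 / 4 * hpow
  · right
    linear_combination -cone_eq_insert + cone_eq_sum + hcone / 4 - 1 / 4 * hpow
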